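/- Let n ≥ 3 and let α_n be an optimal set of n-means for P such that α_n ∩ J_j ≠ ∅ for all j ∈ {1,2,3}, α_n contains no point of (1/5,2/5) ∪ (3/5,4/5), and for each j the Voronoi region of any point of α_n ∩ J_j contains no point of J_i for i ≠ j. Set β_j = α_n ∩ J_j and n_j = card β_j. Then for each j, the preimage S_j⁻¹(β_j) is an optimal set of n_j-means for P, and V_n = (1/75)(V_{n_1} + V_{n_2} + V_{n_3}). -/

import Mathlib

open MeasureTheory Filter
open scoped ENNReal

noncomputable section

/-- The three contractive similarities `S j x = x/5 + 2 j/5` (indexing `j = 0,1,2`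
corresponds to the paper's `j = 1,2,3`). -/
def S (j : Fin 3) : ℝ → ℝ := fun x => x / 5 + 2 * (j : ℝ) / 5

/-- For a word `σ ∈ {1,2,3}^k`, the composition `S_σ = S_{σ 0} ∘ ⋯ ∘ S_{σ (k-1)}`. -/
def Sword {k : ℕ} (σ : Fin k → Fin 3) : ℝ → ℝ :=
  (List.ofFn fun i => S (σ i)).foldr (· ∘ ·) id

/-- The basic interval `J j = S j ([0,1])`. -/
def J (j : Fin 3) : Set ℝ := S j '' Set.Icc 0 1

/-- The interval `J_σ = S_σ([0,1])`. -/
def Jword {k : ℕ} (σ : Fin k → Fin 3) : Set ℝ := Sword σ '' Set.Icc 0 1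

/-- The distortion error `V(P; α) = ∫ min_{a ∈ α} (x - a)^2 dP(x)`. -/
def distortion (P : Measure ℝ) (α : Set ℝ) : ℝ :=
  ∫ x, (⨅ a : α, (x - (a : ℝ)) ^ 2) ∂P

/-- The `n`-th quantization error
`V_n = inf { V(P; α) : α ⊂ ℝ finite, 1 ≤ card α ≤ n }`. -/
def quantErr (P : Measure ℝ) (n : ℕ) : ℝ :=
  sInf {e | ∃ α : Set ℝ, α.Finite ∧ α.Nonempty ∧ α.ncard ≤ n ∧ distortion P α = e}

/-- The self-similarity equation `P = (1/3)(P∘S₁⁻¹ + P∘S₂⁻¹ + P∘S₃⁻¹)`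
characterizing the standard triadic Cantor distribution. -/
def IsTriadicCantor (P : Measure ℝ) : Prop :=
  P = (3 : ℝ≥0∞)⁻¹ • (P.map (S 0) + P.map (S 1) + P.map (S 2))

/-!
Self-similarity splits the distortion of a finite set `β` as `V(P; β) = ⅓ ∑ⱼ ∫ d(Sⱼ y, β)² dP(y)`,
and since `Sⱼ` scales distances by `1/5`, the `j`-th term is `V(P; γ)/25` whenever `β` may be
replaced by `Sⱼ γ` near `Sⱼ y`. For the optimal `α`, almost every point has its nearest neighbour
in `[0, 1] ⊇ supp P`, so by the gap and Voronoi hypotheses the nearest neighbour of a point of `Jⱼ`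
lies in `βⱼ`. This gives `Vₙ = (1/75) ∑ⱼ V(P; Sⱼ⁻¹ βⱼ) ≥ (1/75) ∑ⱼ V_{nⱼ}`, while gluing the
images `Sⱼ γⱼ` of near-optimal sets gives `Vₙ ≤ (1/75) ∑ⱼ V_{nⱼ}`; hence all these inequalities
are equalities.
-/

open Set Metric

theorem iInf_sq_sub_eq_infDist_sq {α : Set ℝ} (hfin : α.Finite) (hne : α.Nonempty) (x : ℝ) :
    ⨅ a : α, (x - a) ^ 2 = infDist x α ^ 2 := by
  have : Nonempty α := hne.to_subtype
  obtain ⟨c, hc, hxc⟩ := hfin.isCompact.exists_infDist_eq_dist hne x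
  have hsq : ∀ a : ℝ, (x - a) ^ 2 = dist x a ^ 2 := fun a => by rw [Real.dist_eq, sq_abs]
  refine le_antisymm ?_ (le_ciInf fun a => ?_)
  · refine (ciInf_le ⟨0, ?_⟩ ⟨c, hc⟩).trans_eq (by rw [hsq, hxc])
    rintro _ ⟨a, rfl⟩
    positivity
  · rw [hsq]
    exact pow_le_pow_left₀ infDist_nonneg (infDist_le_dist_of_mem a.2) 2

theorem distortion_eq_integral_infDist_sq (P : Measure ℝ) {α : Set ℝ} (hfin : α.Finite)
    (hne : α.Nonempty) : distortion P α = ∫ x, infDist x α ^ 2 ∂P := by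
  simp_rw [distortion, iInf_sq_sub_eq_infDist_sq hfin hne]

theorem distortion_nonneg (P : Measure ℝ) (α : Set ℝ) : 0 ≤ distortion P α :=
  integral_nonneg fun _ => Real.iInf_nonneg fun _ => sq_nonneg _

theorem quantErr_le_distortion (P : Measure ℝ) {α : Set ℝ} {n : ℕ} (hfin : α.Finite)
    (hne : α.Nonempty) (hcard : α.ncard ≤ n) : quantErr P n ≤ distortion P α :=
  csInf_le ⟨0, by rintro _ ⟨β, -, -, -, rfl⟩; exact distortion_nonneg P β⟩
    ⟨α, hfin, hne, hcard, rfl⟩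

theorem exists_distortion_lt (P : Measure ℝ) {n : ℕ} (hn : 1 ≤ n) {c : ℝ}
    (hc : quantErr P n < c) :
    ∃ α : Set ℝ, α.Finite ∧ α.Nonempty ∧ α.ncard ≤ n ∧ distortion P α < c := by
  have hsingleton : ({0} : Set ℝ).ncard ≤ n := by simpa using hn
  unfold quantErr at hc
  obtain ⟨_, ⟨α, hfin, hne, hcard, rfl⟩, hlt⟩ :=
    exists_lt_of_csInf_lt
      (by exact ⟨_, {0}, finite_singleton 0, singleton_nonempty 0, hsingleton, rfl⟩) hc
  exact ⟨α, hfin, hne, hcard, hlt⟩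

theorem Continuous.integrable_of_ae_mem {X E : Type*} [MeasurableSpace X] [TopologicalSpace X]
    [OpensMeasurableSpace X] [T2Space X] [NormedAddCommGroup E] {P : Measure X}
    [IsFiniteMeasure P] {K : Set X} (hK : IsCompact K) (hPK : ∀ᵐ x ∂P, x ∈ K) {f : X → E}
    (hf : Continuous f) : Integrable f P := by
  rw [← Measure.restrict_eq_self_of_ae_mem hPK]
  exact hf.continuousOn.integrableOn_compact hK

theorem dist_projIcc_le {a b : ℝ} (h : a ≤ b) {x : ℝ} (hx : x ∈ Icc a b) (c : ℝ) :
    dist x (projIcc a b h c) ≤ dist x c := by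
  simpa [projIcc_of_mem h hx, Real.dist_eq] using abs_projIcc_sub_projIcc h (c := x) (d := c)

theorem dist_projIcc_lt {a b : ℝ} (h : a ≤ b) {x c : ℝ} (hx : x ∈ Icc a b) (hc : c ∉ Icc a b) :
    dist x (projIcc a b h c) < dist x c := by
  rw [Real.dist_eq, Real.dist_eq]
  rcases not_and_or.1 hc with hc | hc
  · rw [projIcc_of_le_left h (not_le.1 hc).le, abs_of_nonneg (by linarith [hx.1]),
      abs_of_nonneg (by linarith [hx.1])]
    linarith
  · rw [projIcc_of_right_le h (not_le.1 hc).le, abs_of_nonpos (by linarith [hx.2]),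
      abs_of_nonpos (by linarith [hx.2])]
    linarith

/-- Projecting an optimal set onto `[a, b]` cannot increase the distortion and strictly decreases
the error at every point whose nearest neighbour lies outside `[a, b]`. -/
theorem ae_infDist_eq_infDist_inter_Icc {P : Measure ℝ} [IsFiniteMeasure P] {a b : ℝ}
    (hab : a ≤ b) (hP : ∀ᵐ x ∂P, x ∈ Icc a b) {n : ℕ} {α : Set ℝ} (hfin : α.Finite)
    (hne : α.Nonempty) (hcard : α.ncard ≤ n) (hopt : distortion P α = quantErr P n) :
    ∀ᵐ x ∂P, infDist x α = infDist x (α ∩ Icc a b) := by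
  set π : ℝ → ℝ := fun c => projIcc a b hab c
  have hint : ∀ β : Set ℝ, Integrable (fun x => infDist x β ^ 2) P := fun β =>
    ((continuous_infDist_pt β).pow 2).integrable_of_ae_mem isCompact_Icc hP
  have hle : (fun x => infDist x (π '' α) ^ 2) ≤ᵐ[P] fun x => infDist x α ^ 2 := by
    filter_upwards [hP] with x hx
    obtain ⟨c, hc, hxc⟩ := hfin.isCompact.exists_infDist_eq_dist hne x
    refine pow_le_pow_left₀ infDist_nonneg ?_ 2
    rw [hxc]
    exact (infDist_le_dist_of_mem (mem_image_of_mem π hc)).trans (dist_projIcc_le hab hx c)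
  have hopt' : ∫ x, infDist x α ^ 2 ∂P ≤ ∫ x, infDist x (π '' α) ^ 2 ∂P := by
    rw [← distortion_eq_integral_infDist_sq P hfin hne, hopt,
      ← distortion_eq_integral_infDist_sq P (hfin.image π) (hne.image π)]
    exact quantErr_le_distortion P (hfin.image π) (hne.image π)
      ((ncard_image_le hfin).trans hcard)
  have heq : (fun x => infDist x (π '' α) ^ 2) =ᵐ[P] fun x => infDist x α ^ 2 :=
    (integral_eq_iff_of_ae_le (hint _) (hint _) hle).1
      (le_antisymm (integral_mono_ae (hint _) (hint _) hle) hopt')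
  filter_upwards [hP, heq] with x hx hx'
  obtain ⟨c, hc, hxc⟩ := hfin.isCompact.exists_infDist_eq_dist hne x
  have hcI : c ∈ Icc a b := by
    by_contra hcI
    have hlt : infDist x (π '' α) < infDist x α :=
      (infDist_le_dist_of_mem (mem_image_of_mem π hc)).trans_lt
        (hxc ▸ dist_projIcc_lt hab hx hcI)
    exact hlt.ne ((sq_eq_sq₀ infDist_nonneg infDist_nonneg).1 hx')
  exact le_antisymm (infDist_le_infDist_of_subset inter_subset_left ⟨c, hc, hcI⟩)
    ((infDist_le_dist_of_mem (show c ∈ α ∩ Icc a b from ⟨hc, hcI⟩)).trans_eq hxc.symm)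

theorem continuous_S (j : Fin 3) : Continuous (S j) := by
  unfold S
  fun_prop

theorem S_injective (j : Fin 3) : Function.Injective (S j) := fun x y h => by
  simp only [S] at h
  linarith

theorem S_surjective (j : Fin 3) : Function.Surjective (S j) := fun y =>
  ⟨5 * y - 2 * j, by simp only [S]; ring⟩

theorem infDist_S_image (j : Fin 3) (y : ℝ) (γ : Set ℝ) :
    infDist (S j y) (S j '' γ) = infDist y γ / 5 := by
  have hS : S j = IsometryEquiv.addRight (2 * (j : ℝ) / 5) ∘ fun x => (5 : ℝ)⁻¹ • x := by
    ext x
    simp [S, div_eq_inv_mul]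
  rw [hS, image_comp, Function.comp_apply, infDist_image (IsometryEquiv.isometry _), image_smul,
    infDist_smul₀ (by norm_num)]
  norm_num
  ring

theorem integral_infDist_S_image_sq (P : Measure ℝ) (j : Fin 3) {γ : Set ℝ} (hfin : γ.Finite)
    (hne : γ.Nonempty) :
    ∫ y, infDist (S j y) (S j '' γ) ^ 2 ∂P = distortion P γ / 25 := by
  simp_rw [infDist_S_image, div_pow]
  rw [integral_div, distortion_eq_integral_infDist_sq P hfin hne]
  norm_num

theorem J_eq_Icc (j : Fin 3) : J j = Icc (2 * (j : ℝ) / 5) (2 * j / 5 + 1 / 5) := by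
  ext x
  constructor
  · rintro ⟨y, hy, rfl⟩
    constructor <;> simp only [S] <;> linarith [hy.1, hy.2]
  · rintro ⟨h1, h2⟩
    exact ⟨5 * x - 2 * j, ⟨by linarith, by linarith⟩, by simp only [S]; ring⟩

theorem natCast_fin_three_le (j : Fin 3) : (j : ℝ) ≤ 2 := by
  exact_mod_cast Nat.le_of_lt_succ j.2

theorem J_subset_Icc (j : Fin 3) : J j ⊆ Icc 0 1 := by
  rw [J_eq_Icc]
  exact Icc_subset_Icc (by positivity) (by linarith [natCast_fin_three_le j])

theorem pairwise_disjoint_J : Pairwise fun i j => Disjoint (J i) (J j) := by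
  intro i j hij
  fin_cases i <;> fin_cases j <;> simp only [J_eq_Icc, disjoint_left] at hij ⊢ <;>
    try contradiction
  all_goals
    rintro x ⟨h1, h2⟩ ⟨h3, h4⟩
    norm_num at h1 h2 h3 h4
    linarith

theorem exists_mem_J {x : ℝ} (hx : x ∈ Icc (0 : ℝ) 1)
    (hgap : x ∉ Ioo (1 / 5 : ℝ) (2 / 5) ∪ Ioo (3 / 5 : ℝ) (4 / 5)) : ∃ i, x ∈ J i := by
  simp only [mem_union, mem_Ioo, not_or, not_and_or, not_lt] at hgap
  obtain ⟨hx0, hx1⟩ := hx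
  simp only [J_eq_Icc, mem_Icc]
  rcases le_or_gt x (1 / 5) with h | h
  · exact ⟨0, by norm_num; constructor <;> linarith⟩
  rcases le_or_gt x (3 / 5) with h' | h'
  · exact ⟨1, by norm_num; constructor <;> linarith [hgap.1.resolve_left (not_le.2 h)]⟩
  · exact ⟨2, by norm_num; constructor <;> linarith [hgap.2.resolve_left (not_le.2 h')]⟩

theorem sum_ncard_inter_J_le {α : Set ℝ} (hfin : α.Finite) : ∑ j, (α ∩ J j).ncard ≤ α.ncard := by
  rw [← finsum_eq_sum_of_fintype, ← ncard_iUnion_of_finite (fun j => hfin.inter_of_left _)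
    fun i j hij => (pairwise_disjoint_J hij).mono inter_subset_right inter_subset_right]
  exact ncard_le_ncard (iUnion_subset fun j => inter_subset_left) hfin

section TriadicCantor

variable {P : Measure ℝ}

theorem IsTriadicCantor.eq_sum (hP : IsTriadicCantor P) :
    P = (3 : ℝ≥0∞)⁻¹ • ∑ j : Fin 3, P.map (S j) := by
  rw [Fin.sum_univ_three]
  exact hP

theorem IsTriadicCantor.measure_eq (hP : IsTriadicCantor P) {A : Set ℝ} (hA : MeasurableSet A) :
    P A = 3⁻¹ * ∑ j : Fin 3, P (S j ⁻¹' A) := by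
  conv_lhs => rw [hP.eq_sum]
  simp [Measure.finsetSum_apply, Measure.map_apply (continuous_S _).measurable hA]

theorem IsTriadicCantor.measure_compl_Icc_le (hP : IsTriadicCantor P) (t : ℝ) :
    P (Icc (-t) (1 + t))ᶜ ≤ P (Icc (-(5 * t)) (1 + 5 * t))ᶜ := by
  have hsub : ∀ j : Fin 3, S j ⁻¹' (Icc (-t) (1 + t))ᶜ ⊆ (Icc (-(5 * t)) (1 + 5 * t))ᶜ := by
    intro j
    rw [preimage_compl, compl_subset_compl]
    rintro x ⟨h1, h2⟩
    have hj : (0 : ℝ) ≤ j := Nat.cast_nonneg _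
    have hj' := natCast_fin_three_le j
    simp only [mem_preimage, S, mem_Icc]
    constructor <;> linarith
  rw [hP.measure_eq measurableSet_Icc.compl]
  calc 3⁻¹ * ∑ j : Fin 3, P (S j ⁻¹' (Icc (-t) (1 + t))ᶜ)
      ≤ 3⁻¹ * ∑ _j : Fin 3, P (Icc (-(5 * t)) (1 + 5 * t))ᶜ := by
        gcongr with j
        exact hsub j
    _ = P (Icc (-(5 * t)) (1 + 5 * t))ᶜ := by
        simp [ENNReal.inv_mul_cancel_left]

/-- Self-similarity pushes any mass outside `[-t, 1 + t]` outside `[-5ᵏt, 1 + 5ᵏt]` for all `k`. -/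
theorem IsTriadicCantor.measure_compl_Icc_eq_zero [IsFiniteMeasure P] (hP : IsTriadicCantor P)
    {t : ℝ} (ht : 0 < t) : P (Icc (-t) (1 + t))ᶜ = 0 := by
  set A : ℕ → Set ℝ := fun k => (Icc (-(5 ^ k * t)) (1 + 5 ^ k * t))ᶜ
  have hiter : ∀ k, P (Icc (-t) (1 + t))ᶜ ≤ P (A k) := by
    intro k
    induction k with
    | zero => simp [A]
    | succ k ih =>
      refine ih.trans ?_
      simpa [A, pow_succ, mul_assoc, mul_comm, mul_left_comm] using
        hP.measure_compl_Icc_le (5 ^ k * t)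
  have hanti : Antitone A := fun k l hkl => by
    have : (5 : ℝ) ^ k * t ≤ 5 ^ l * t := by gcongr; norm_num
    exact compl_subset_compl.2 (Icc_subset_Icc (by linarith) (by linarith))
  have hempty : ⋂ k, A k = ∅ := by
    refine eq_empty_of_forall_notMem fun x hx => ?_
    obtain ⟨k, hk⟩ := pow_unbounded_of_one_lt (|x| / t) (by norm_num : (1 : ℝ) < 5)
    rw [div_lt_iff₀ ht] at hk
    exact mem_iInter.1 hx k ⟨by linarith [neg_abs_le x], by linarith [le_abs_self x]⟩
  have hlim := tendsto_measure_iInter_atTop (μ := P)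
    (fun k => measurableSet_Icc.compl.nullMeasurableSet) hanti ⟨0, measure_ne_top P _⟩
  rw [hempty, measure_empty] at hlim
  exact nonpos_iff_eq_zero.1 (ge_of_tendsto' hlim hiter)

theorem IsTriadicCantor.ae_mem_Icc [IsFiniteMeasure P] (hP : IsTriadicCantor P) :
    ∀ᵐ x ∂P, x ∈ Icc (0 : ℝ) 1 := by
  have hcover : (Icc (0 : ℝ) 1)ᶜ ⊆ ⋃ k : ℕ, (Icc (-(1 / (k + 1) : ℝ)) (1 + 1 / (k + 1)))ᶜ := by
    intro x hx
    simp only [mem_compl_iff, mem_Icc, not_and_or, not_le] at hx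
    simp only [mem_iUnion, mem_compl_iff, mem_Icc, not_and_or, not_le]
    rcases hx with h | h
    · obtain ⟨k, hk⟩ := exists_nat_one_div_lt (show (0 : ℝ) < -x by linarith)
      exact ⟨k, Or.inl (by linarith)⟩
    · obtain ⟨k, hk⟩ := exists_nat_one_div_lt (show (0 : ℝ) < x - 1 by linarith)
      exact ⟨k, Or.inr (by linarith)⟩
  exact measure_mono_null hcover
    (measure_iUnion_null fun k => hP.measure_compl_Icc_eq_zero (by positivity))

theorem IsTriadicCantor.map_absolutelyContinuous (hP : IsTriadicCantor P) (j : Fin 3) :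
    P.map (S j) ≪ P := by
  refine Measure.AbsolutelyContinuous.mk fun A hA hPA => ?_
  rw [hP.measure_eq hA, mul_eq_zero, Finset.sum_eq_zero_iff] at hPA
  rw [Measure.map_apply (continuous_S j).measurable hA]
  exact (hPA.resolve_left (by simp)) j (Finset.mem_univ j)

theorem IsTriadicCantor.ae_comp (hP : IsTriadicCantor P) (j : Fin 3) {p : ℝ → Prop}
    (h : ∀ᵐ x ∂P, p x) : ∀ᵐ y ∂P, p (S j y) :=
  ae_of_ae_map (continuous_S j).aemeasurable ((hP.map_absolutelyContinuous j).ae_le h)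

theorem IsTriadicCantor.integrable [IsFiniteMeasure P] (hP : IsTriadicCantor P) {f : ℝ → ℝ}
    (hf : Continuous f) : Integrable f P :=
  hf.integrable_of_ae_mem isCompact_Icc hP.ae_mem_Icc

theorem IsTriadicCantor.integral_eq (hP : IsTriadicCantor P) {f : ℝ → ℝ} (hf : Integrable f P) :
    ∫ x, f x ∂P = 3⁻¹ * ∑ j : Fin 3, ∫ y, f (S j y) ∂P := by
  have hmap : ∀ j : Fin 3, Integrable f (P.map (S j)) := by
    rw [hP.eq_sum, integrable_smul_measure (by simp) (by simp), integrable_finsetSum_measure] at hf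
    exact fun j => hf j (Finset.mem_univ j)
  conv_lhs => rw [hP.eq_sum]
  rw [integral_smul_measure, integral_finsetSum_measure fun j _ => hmap j]
  simp [integral_map (continuous_S _).aemeasurable (hmap _).aestronglyMeasurable]

theorem IsTriadicCantor.distortion_eq_sum [IsFiniteMeasure P] (hP : IsTriadicCantor P)
    {β : Set ℝ} (hfin : β.Finite) (hne : β.Nonempty) :
    distortion P β = 3⁻¹ * ∑ j : Fin 3, ∫ y, infDist (S j y) β ^ 2 ∂P := by
  rw [distortion_eq_integral_infDist_sq P hfin hne,
    hP.integral_eq (hP.integrable (f := fun x => infDist x β ^ 2)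
      ((continuous_infDist_pt β).pow 2))]

theorem IsTriadicCantor.distortion_le_of_image_subset [IsFiniteMeasure P]
    (hP : IsTriadicCantor P) {β : Set ℝ} (hfin : β.Finite) {γ : Fin 3 → Set ℝ}
    (hγfin : ∀ j, (γ j).Finite) (hγne : ∀ j, (γ j).Nonempty) (hsub : ∀ j, S j '' γ j ⊆ β) :
    distortion P β ≤ 1 / 75 * ∑ j, distortion P (γ j) := by
  rw [hP.distortion_eq_sum hfin (((hγne 0).image _).mono (hsub 0))]
  calc 3⁻¹ * ∑ j : Fin 3, ∫ y, infDist (S j y) β ^ 2 ∂P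
      ≤ 3⁻¹ * ∑ j : Fin 3, ∫ y, infDist (S j y) (S j '' γ j) ^ 2 ∂P := by
        refine mul_le_mul_of_nonneg_left (Finset.sum_le_sum fun j _ => ?_) (by norm_num)
        refine integral_mono (hP.integrable ?_) (hP.integrable ?_) fun y => ?_
        · exact ((continuous_infDist_pt _).comp (continuous_S j)).pow 2
        · exact ((continuous_infDist_pt _).comp (continuous_S j)).pow 2
        exact pow_le_pow_left₀ infDist_nonneg
          (infDist_le_infDist_of_subset (hsub j) ((hγne j).image _)) 2
    _ = 1 / 75 * ∑ j, distortion P (γ j) := by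
        simp_rw [integral_infDist_S_image_sq P _ (hγfin _) (hγne _), ← Finset.sum_div]
        ring

theorem IsTriadicCantor.distortion_eq_of_ae_infDist_eq [IsFiniteMeasure P]
    (hP : IsTriadicCantor P) {β : Set ℝ} (hfin : β.Finite) (hne : β.Nonempty)
    {γ : Fin 3 → Set ℝ} (hγfin : ∀ j, (γ j).Finite) (hγne : ∀ j, (γ j).Nonempty)
    (h : ∀ j, ∀ᵐ y ∂P, infDist (S j y) β = infDist (S j y) (S j '' γ j)) :
    distortion P β = 1 / 75 * ∑ j, distortion P (γ j) := by
  rw [hP.distortion_eq_sum hfin hne]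
  have hj : ∀ j, ∫ y, infDist (S j y) β ^ 2 ∂P = distortion P (γ j) / 25 := fun j => by
    rw [← integral_infDist_S_image_sq P j (hγfin j) (hγne j)]
    refine integral_congr_ae ?_
    filter_upwards [h j] with y hy
    rw [hy]
  simp_rw [hj, ← Finset.sum_div]
  ring

theorem IsTriadicCantor.quantErr_le_sum [IsFiniteMeasure P] (hP : IsTriadicCantor P)
    {m : Fin 3 → ℕ} (hm : ∀ j, 1 ≤ m j) {n : ℕ} (hn : ∑ j, m j ≤ n) :
    quantErr P n ≤ 1 / 75 * ∑ j, quantErr P (m j) := by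
  refine le_of_forall_pos_lt_add fun ε hε => ?_
  choose γ hfin hne hcard hlt using
    fun j => exists_distortion_lt P (hm j) (lt_add_of_pos_right (quantErr P (m j)) hε)
  have hβfin : (⋃ j, S j '' γ j).Finite := finite_iUnion fun j => (hfin j).image _
  have hβne : (⋃ j, S j '' γ j).Nonempty := ((hne 0).image _).mono (subset_iUnion _ 0)
  have hβcard : (⋃ j, S j '' γ j).ncard ≤ n :=
    ((ncard_iUnion_le_of_fintype _).trans (Finset.sum_le_sum fun j _ =>
      (ncard_image_of_injective _ (S_injective j)).trans_le (hcard j))).trans hn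
  calc quantErr P n ≤ distortion P (⋃ j, S j '' γ j) :=
        quantErr_le_distortion P hβfin hβne hβcard
    _ ≤ 1 / 75 * ∑ j, distortion P (γ j) :=
        hP.distortion_le_of_image_subset hβfin hfin hne
          fun j => subset_iUnion (fun i => S i '' γ i) j
    _ < 1 / 75 * ∑ j, (quantErr P (m j) + ε) := by
        gcongr with j
        · exact Finset.univ_nonempty
        · exact hlt j
    _ ≤ 1 / 75 * ∑ j, quantErr P (m j) + ε := by
        rw [Finset.sum_add_distrib]
        simp
        linarith

end TriadicCantor

theorem infDist_eq_infDist_inter_J {α : Set ℝ} (hfin : α.Finite)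
    (hgap : ∀ x ∈ α, x ∉ Ioo (1 / 5 : ℝ) (2 / 5) ∪ Ioo (3 / 5 : ℝ) (4 / 5))
    (hvor : ∀ j : Fin 3, ∀ a ∈ α ∩ J j, ∀ i : Fin 3, i ≠ j →
      ∀ x ∈ {x : ℝ | |x - a| = ⨅ b : α, |x - (b : ℝ)|}, x ∉ J i)
    {j : Fin 3} {x : ℝ} (hx : x ∈ J j) (hne : (α ∩ Icc 0 1).Nonempty)
    (hxα : infDist x α = infDist x (α ∩ Icc 0 1)) :
    infDist x α = infDist x (α ∩ J j) := by
  obtain ⟨c, ⟨hcα, hcI⟩, hxc⟩ := (hfin.inter_of_left _).isCompact.exists_infDist_eq_dist hne x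
  obtain ⟨i, hci⟩ := exists_mem_J hcI (hgap c hcα)
  obtain rfl : i = j := by
    by_contra hij
    refine hvor i c ⟨hcα, hci⟩ j (Ne.symm hij) x ?_ hx
    show |x - c| = ⨅ b : α, |x - (b : ℝ)|
    simp_rw [← Real.dist_eq, ← hxc, ← hxα, infDist_eq_iInf]
  exact le_antisymm (infDist_le_infDist_of_subset inter_subset_left ⟨c, hcα, hci⟩)
    ((infDist_le_dist_of_mem (show c ∈ α ∩ J i from ⟨hcα, hci⟩)).trans_eq
      (hxα.trans hxc).symm)

theorem stmt13_general (P : Measure ℝ) [IsProbabilityMeasure P] (hP : IsTriadicCantor P)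
    (n : ℕ) (α : Set ℝ) (hfin : α.Finite)
    (hcard : α.ncard ≤ n) (hopt : distortion P α = quantErr P n)
    (hint : ∀ j : Fin 3, (α ∩ J j).Nonempty)
    (hgap : ∀ x ∈ α, x ∉ Set.Ioo (1 / 5 : ℝ) (2 / 5) ∪ Set.Ioo (3 / 5 : ℝ) (4 / 5))
    (hvor : ∀ j : Fin 3, ∀ a ∈ α ∩ J j, ∀ i : Fin 3, i ≠ j →
      ∀ x ∈ {x : ℝ | |x - a| = ⨅ b : α, |x - (b : ℝ)|}, x ∉ J i) :
    (∀ j : Fin 3,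
      (S j ⁻¹' (α ∩ J j)).Finite ∧ (S j ⁻¹' (α ∩ J j)).Nonempty ∧
      (S j ⁻¹' (α ∩ J j)).ncard ≤ (α ∩ J j).ncard ∧
      distortion P (S j ⁻¹' (α ∩ J j)) = quantErr P ((α ∩ J j).ncard)) ∧
    quantErr P n = (1 / 75) *
      (quantErr P ((α ∩ J 0).ncard) + quantErr P ((α ∩ J 1).ncard) +
        quantErr P ((α ∩ J 2).ncard)) := by
  set γ : Fin 3 → Set ℝ := fun j => S j ⁻¹' (α ∩ J j)
  have hγfin : ∀ j, (γ j).Finite := fun j => (hfin.inter_of_left _).preimage (S_injective j).injOn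
  have hγne : ∀ j, (γ j).Nonempty := fun j => (S_surjective j).nonempty_preimage.2 (hint j)
  have hγcard : ∀ j, (γ j).ncard = (α ∩ J j).ncard := fun j =>
    ncard_preimage_of_injective_subset_range (S_injective j) (by simp [(S_surjective j).range_eq])
  have hne : α.Nonempty := (hint 0).mono inter_subset_left
  have hαI := ae_infDist_eq_infDist_inter_Icc zero_le_one hP.ae_mem_Icc hfin hne hcard hopt
  have hsplit : quantErr P n = 1 / 75 * ∑ j, distortion P (γ j) := by
    refine hopt ▸ hP.distortion_eq_of_ae_infDist_eq hfin hne hγfin hγne fun j => ?_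
    filter_upwards [hP.ae_comp j hαI, hP.ae_mem_Icc] with y hy hyI
    rw [image_preimage_eq _ (S_surjective j)]
    exact infDist_eq_infDist_inter_J hfin hgap hvor (mem_image_of_mem _ hyI)
      ((hint j).mono (inter_subset_inter_right α (J_subset_Icc j))) hy
  have hupper : quantErr P n ≤ 1 / 75 * ∑ j, quantErr P (α ∩ J j).ncard :=
    hP.quantErr_le_sum (fun j => (ncard_pos (hfin.inter_of_left _)).2 (hint j))
      ((sum_ncard_inter_J_le hfin).trans hcard)
  have hlower : ∀ j, quantErr P (α ∩ J j).ncard ≤ distortion P (γ j) := fun j =>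
    quantErr_le_distortion P (hγfin j) (hγne j) (hγcard j).le
  have hoptimal : ∀ j, quantErr P (α ∩ J j).ncard = distortion P (γ j) := fun j =>
    (Finset.sum_eq_sum_iff_of_le fun j _ => hlower j).1
      (by linarith [Finset.sum_le_sum fun j (_ : j ∈ Finset.univ) => hlower j])
      j (Finset.mem_univ j)
  refine ⟨fun j => ⟨hγfin j, hγne j, (hγcard j).le, (hoptimal j).symm⟩, ?_⟩
  rw [hsplit]
  simp only [Fin.sum_univ_three, hoptimal]

theorem stmt13 (P : Measure ℝ) [IsProbabilityMeasure P] (hP : IsTriadicCantor P)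
    (n : ℕ) (hn : 3 ≤ n) (α : Set ℝ) (hfin : α.Finite) (hne : α.Nonempty)
    (hcard : α.ncard ≤ n) (hopt : distortion P α = quantErr P n)
    (hint : ∀ j : Fin 3, (α ∩ J j).Nonempty)
    (hgap : ∀ x ∈ α, x ∉ Set.Ioo (1 / 5 : ℝ) (2 / 5) ∪ Set.Ioo (3 / 5 : ℝ) (4 / 5))
    (hvor : ∀ j : Fin 3, ∀ a ∈ α ∩ J j, ∀ i : Fin 3, i ≠ j →
      ∀ x ∈ {x : ℝ | |x - a| = ⨅ b : α, |x - (b : ℝ)|}, x ∉ J i) :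
    (∀ j : Fin 3,
      (S j ⁻¹' (α ∩ J j)).Finite ∧ (S j ⁻¹' (α ∩ J j)).Nonempty ∧
      (S j ⁻¹' (α ∩ J j)).ncard ≤ (α ∩ J j).ncard ∧
      distortion P (S j ⁻¹' (α ∩ J j)) = quantErr P ((α ∩ J j).ncard)) ∧
    quantErr P n = (1 / 75) *
      (quantErr P ((α ∩ J 0).ncard) + quantErr P ((α ∩ J 1).ncard) +
        quantErr P ((α ∩ J 2).ncard)) :=
  stmt13_general P hP n α hfin hcard hopt hint hgap hvor
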